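/- Let (G,w) be a finite weighted graph with positive real edge weights, let h ≥ 1 be an integer, let δ ≥ 0, and let L ⊆ V be a set of vertices with s ∈ L. Let (G',w') be a weighted graph on vertex set L that has an edge xy whenever dist^h_{G,w}(x,y) < ∞, with a weight satisfying dist^h_{G,w}(x,y) ≤ w'(xy) ≤ (1+δ)·dist^h_{G,w}(x,y). Let u be a vertex of G, and for each v ∈ L let d'(u,v) be a value satisfying dist^h_{G,w}(u,v) ≤ d'(u,v) ≤ (1+δ)·dist^h_{G,w}(u,v) when dist^h_{G,w}(u,v) < ∞, and d'(u,v) = ∞ otherwise. Suppose there is a u–s walk P = ⟨u = v_0, v_1, …, v_k = s⟩ in G with w(P) = dist_{G,w}(u,s) such that, writing i_1 < i_2 < … < i_t for the indices j with v_{i_j} ∈ L (note i_t = k), one has i_1 ≤ h and i_{j+1} − i_j ≤ h for all 1 ≤ j < t. Then dist_{G,w}(u,s) ≤ min_{v ∈ L} ( d'(u,v) + dist_{G',w'}(v,s) ) ≤ (1+δ)·dist_{G,w}(u,s). -/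

import Mathlib

open SimpleGraph
open scoped ENNReal

noncomputable section

/-- The weight of a walk: the sum of the weights of its edges (with multiplicity). -/
def walkWeight {V : Type*} {G : SimpleGraph V} (w : Sym2 V → ℝ) {u v : V}
    (p : G.Walk u v) : ℝ :=
  (p.edges.map w).sum

/-- The distance between `u` and `v`: the minimum weight of a `u`–`v` walk (`∞` if none). -/
def wdist {V : Type*} (G : SimpleGraph V) (w : Sym2 V → ℝ) (u v : V) : ℝ≥0∞ :=
  ⨅ p : G.Walk u v, ENNReal.ofReal (walkWeight w p)

/-- The `h`-hop distance between `u` and `v`: the minimum weight of a `u`–`v` walk with at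
most `h` edges (`∞` if none). -/
def hopDist {V : Type*} (G : SimpleGraph V) (w : Sym2 V → ℝ) (h : ℕ) (u v : V) : ℝ≥0∞ :=
  ⨅ p : {p : G.Walk u v // p.length ≤ h}, ENNReal.ofReal (walkWeight w p.1)

/-!
Lower bound: a `G'`-walk from `v` to `s` is no shorter than a `G`-walk, since each `G'`-edge
weighs at least the hop distance of its endpoints; together with `d'(u, v) ≥ dist(u, v)` and the
triangle inequality this gives `dist(u, s) ≤ d'(u, v) + dist'(v, s)`.

Upper bound: cut the shortest walk `P` at its vertices in `L`. The first piece has at most `h`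
edges, so `d'(u, v_{i_1}) ≤ (1 + δ) w(P[0, i_1])`, and every further piece has at most `h` edges,
so the `G'`-edge between consecutive cut points weighs at most `(1 + δ)` times that piece. Summing
over the pieces gives `(1 + δ) w(P)`.
-/

lemma Set.Finite.exists_pos_forall_le {α : Type*} {s : Set α} (hs : s.Finite) {f : α → ℝ}
    (hf : ∀ x ∈ s, 0 < f x) : ∃ m > 0, ∀ x ∈ s, m ≤ f x := by
  rcases s.eq_empty_or_nonempty with rfl | hne
  · exact ⟨1, one_pos, by simp⟩
  · obtain ⟨a, ha, hmin⟩ := Set.exists_min_image s f hs hne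
    exact ⟨f a, hf a ha, hmin⟩

section

variable {V : Type*} {G : SimpleGraph V} {w : Sym2 V → ℝ} {u v x y : V} {h : ℕ}

@[simp] lemma walkWeight_nil : walkWeight w (Walk.nil : G.Walk u u) = 0 := rfl

@[simp] lemma walkWeight_cons (ha : G.Adj u x) (q : G.Walk x v) :
    walkWeight w (Walk.cons ha q) = w s(u, x) + walkWeight w q := by
  simp [walkWeight]

lemma walkWeight_append (p : G.Walk u x) (q : G.Walk x v) :
    walkWeight w (p.append q) = walkWeight w p + walkWeight w q := by
  simp [walkWeight, Walk.edges_append]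

lemma walkWeight_nonneg (hw : ∀ e ∈ G.edgeSet, 0 ≤ w e) (p : G.Walk u v) :
    0 ≤ walkWeight w p := by
  induction p with
  | nil => simp
  | cons ha q ih => simpa only [walkWeight_cons] using add_nonneg (hw _ ha) ih

lemma walkWeight_take_add_walkWeight_drop (p : G.Walk u v) (n : ℕ) :
    walkWeight w (p.take n) + walkWeight w (p.drop n) = walkWeight w p := by
  rw [← walkWeight_append, Walk.append_take_drop_eq]

lemma walkWeight_drop_drop (p : G.Walk u v) (m n : ℕ) :
    walkWeight w ((p.drop m).drop n) = walkWeight w (p.drop (m + n)) := by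
  simp only [walkWeight, Walk.edges_drop, List.drop_drop]

lemma wdist_le_walkWeight (p : G.Walk u v) : wdist G w u v ≤ ENNReal.ofReal (walkWeight w p) :=
  iInf_le _ p

@[simp] lemma wdist_self : wdist G w v v = 0 :=
  nonpos_iff_eq_zero.mp <| by simpa using wdist_le_walkWeight (w := w) (Walk.nil : G.Walk v v)

lemma hopDist_le_walkWeight (p : G.Walk u v) (hp : p.length ≤ h) :
    hopDist G w h u v ≤ ENNReal.ofReal (walkWeight w p) :=
  iInf_le (fun q : {q : G.Walk u v // q.length ≤ h} ↦ ENNReal.ofReal (walkWeight w q.1))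
    ⟨p, hp⟩

lemma wdist_le_hopDist (h : ℕ) : wdist G w u v ≤ hopDist G w h u v :=
  le_iInf fun q ↦ wdist_le_walkWeight q.1

lemma wdist_triangle (hw : ∀ e ∈ G.edgeSet, 0 ≤ w e) (u x v : V) :
    wdist G w u v ≤ wdist G w u x + wdist G w x v := by
  simp only [wdist, ENNReal.iInf_add, ENNReal.add_iInf]
  refine le_iInf₂ fun q p ↦ (wdist_le_walkWeight (p.append q)).trans_eq ?_
  rw [walkWeight_append, ENNReal.ofReal_add (walkWeight_nonneg hw p) (walkWeight_nonneg hw q)]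

lemma wdist_le_add_of_adj (ha : G.Adj u x) :
    wdist G w u v ≤ ENNReal.ofReal (w s(u, x)) + wdist G w x v := by
  simp only [wdist, ENNReal.add_iInf]
  refine le_iInf fun q ↦ (wdist_le_walkWeight (Walk.cons ha q)).trans ?_
  rw [walkWeight_cons]
  exact ENNReal.ofReal_add_le

lemma wdist_pos_of_ne [Finite V] (hw : ∀ e ∈ G.edgeSet, 0 < w e) (hxy : x ≠ y) :
    0 < wdist G w x y := by
  obtain ⟨m, hm, hmw⟩ := G.edgeSet.toFinite.exists_pos_forall_le hw
  refine (ENNReal.ofReal_pos.mpr hm).trans_le <| le_iInf fun p ↦ ?_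
  cases p with
  | nil => exact absurd rfl hxy
  | cons ha q =>
    rw [walkWeight_cons]
    exact ENNReal.ofReal_le_ofReal <|
      le_add_of_le_of_nonneg (hmw _ ha) (walkWeight_nonneg (fun e he ↦ (hw e he).le) q)

lemma wdist_le_wdist_of_forall_adj {G' : SimpleGraph V} {w' : Sym2 V → ℝ}
    (hw : ∀ e ∈ G.edgeSet, 0 ≤ w e) (hw' : ∀ e ∈ G'.edgeSet, 0 ≤ w' e)
    (hadj : ∀ x y, G'.Adj x y → wdist G w x y ≤ ENNReal.ofReal (w' s(x, y))) :
    wdist G w u v ≤ wdist G' w' u v := by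
  refine le_iInf fun q ↦ ?_
  induction q with
  | nil => simp
  | @cons a x b ha r ih =>
    rw [walkWeight_cons, ENNReal.ofReal_add (hw' _ ha) (walkWeight_nonneg hw' r)]
    exact (wdist_triangle hw a x b).trans (add_le_add (hadj a x ha) ih)

lemma hopDist_getVert_add_walkWeight_drop_le (hw : ∀ e ∈ G.edgeSet, 0 ≤ w e)
    (q : G.Walk u v) {m : ℕ} (hm : m ≤ h) :
    hopDist G w h u (q.getVert m) + ENNReal.ofReal (walkWeight w (q.drop m)) ≤
      ENNReal.ofReal (walkWeight w q) := by
  calc hopDist G w h u (q.getVert m) + ENNReal.ofReal (walkWeight w (q.drop m))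
      ≤ ENNReal.ofReal (walkWeight w (q.take m)) + ENNReal.ofReal (walkWeight w (q.drop m)) := by
        gcongr
        exact hopDist_le_walkWeight _ ((q.take_length m).trans_le (min_le_left _ _ |>.trans hm))
    _ = ENNReal.ofReal (walkWeight w q) := by
        rw [← ENNReal.ofReal_add (walkWeight_nonneg hw _) (walkWeight_nonneg hw _),
          walkWeight_take_add_walkWeight_drop]

lemma hopDist_getVert_getVert_add_le (hw : ∀ e ∈ G.edgeSet, 0 ≤ w e)
    (p : G.Walk u v) {i j : ℕ} (hij : i ≤ j) (hjh : j ≤ i + h) :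
    hopDist G w h (p.getVert i) (p.getVert j) + ENNReal.ofReal (walkWeight w (p.drop j)) ≤
      ENNReal.ofReal (walkWeight w (p.drop i)) := by
  obtain ⟨m, rfl⟩ := Nat.exists_eq_add_of_le hij
  rw [← walkWeight_drop_drop, ← Walk.drop_getVert]
  exact hopDist_getVert_add_walkWeight_drop_le hw _ (by omega)

/-- The witness is the `G'`-walk through the vertices of `L` met along `p` after position `j`. -/
theorem wdist_getVert_le_mul_walkWeight_drop {G' : SimpleGraph V} {w' : Sym2 V → ℝ}
    {L : Set V} {c : ℝ≥0∞} (hw : ∀ e ∈ G.edgeSet, 0 ≤ w e)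
    (hG'edge : ∀ x ∈ L, ∀ y ∈ L, x ≠ y → hopDist G w h x y < ⊤ → G'.Adj x y)
    (hw' : ∀ x y, G'.Adj x y → ENNReal.ofReal (w' s(x, y)) ≤ c * hopDist G w h x y)
    (p : G.Walk u v)
    (hgap : ∀ j : ℕ, j ≤ p.length → p.getVert j ∈ L → j < p.length →
      ∃ j' : ℕ, (j' ≤ p.length ∧ p.getVert j' ∈ L) ∧ j < j' ∧ j' ≤ j + h)
    {j : ℕ} (hj : j ≤ p.length) (hjL : p.getVert j ∈ L) :
    wdist G' w' (p.getVert j) v ≤ c * ENNReal.ofReal (walkWeight w (p.drop j)) := by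
  rcases hj.eq_or_lt with rfl | hlt
  · simp [p.getVert_length]
  obtain ⟨j', ⟨hj'le, hj'L⟩, hjj', hj'h⟩ := hgap j hj hjL hlt
  have ih := wdist_getVert_le_mul_walkWeight_drop hw hG'edge hw' p hgap hj'le hj'L
  have hseg := hopDist_getVert_getVert_add_le hw p hjj'.le hj'h
  by_cases hvv : p.getVert j = p.getVert j'
  · calc wdist G' w' (p.getVert j) v = wdist G' w' (p.getVert j') v := by rw [hvv]
      _ ≤ _ := ih.trans (mul_le_mul_right (le_add_self.trans hseg) c)
  have hadj : G'.Adj (p.getVert j) (p.getVert j') :=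
    hG'edge _ hjL _ hj'L hvv ((le_self_add.trans hseg).trans_lt ENNReal.ofReal_lt_top)
  calc wdist G' w' (p.getVert j) v
      ≤ ENNReal.ofReal (w' s(p.getVert j, p.getVert j')) + wdist G' w' (p.getVert j') v :=
        wdist_le_add_of_adj hadj
    _ ≤ c * (hopDist G w h (p.getVert j) (p.getVert j') +
          ENNReal.ofReal (walkWeight w (p.drop j'))) := by
        rw [mul_add]
        exact add_le_add (hw' _ _ hadj) ih
    _ ≤ c * ENNReal.ofReal (walkWeight w (p.drop j)) := mul_le_mul_right hseg c
termination_by p.length - j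

end

theorem stmt_15_general {V : Type*} [Fintype V] (G : SimpleGraph V) (w : Sym2 V → ℝ)
    (hw : ∀ e ∈ G.edgeSet, 0 < w e)
    (h : ℕ) (δ : ℝ)
    (L : Set V) (src : V)
    -- `(G', w')` is a weighted graph on vertex set `L` having an edge `xy` whenever
    -- `hopDist G w h x y < ∞`, with weight satisfying
    -- `hopDist ≤ w'(xy) ≤ (1 + δ) · hopDist`
    (G' : SimpleGraph V) (w' : Sym2 V → ℝ)
    (hG'edge : ∀ x ∈ L, ∀ y ∈ L, x ≠ y → hopDist G w h x y < ⊤ → G'.Adj x y)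
    (hw' : ∀ x y : V, G'.Adj x y →
      hopDist G w h x y ≤ ENNReal.ofReal (w' s(x, y)) ∧
      ENNReal.ofReal (w' s(x, y)) ≤ ENNReal.ofReal (1 + δ) * hopDist G w h x y)
    -- `d' v` approximates the `h`-hop distance from `u` to each `v ∈ L`
    (u : V) (d' : V → ℝ≥0∞)
    (hd' : ∀ v ∈ L,
      (hopDist G w h u v < ⊤ →
        hopDist G w h u v ≤ d' v ∧ d' v ≤ ENNReal.ofReal (1 + δ) * hopDist G w h u v) ∧
      (hopDist G w h u v = ⊤ → d' v = ⊤))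
    -- `p` is a shortest `u`–`src` walk whose vertices in `L` occur within the first `h`
    -- hops and at consecutive gaps of at most `h` hops
    (p : G.Walk u src)
    (hpw : ENNReal.ofReal (walkWeight w p) = wdist G w u src)
    (hfirst : ∃ j : ℕ, (j ≤ p.length ∧ p.getVert j ∈ L) ∧ j ≤ h)
    (hgap : ∀ j : ℕ, j ≤ p.length → p.getVert j ∈ L → j < p.length →
      ∃ j' : ℕ, (j' ≤ p.length ∧ p.getVert j' ∈ L) ∧ j < j' ∧ j' ≤ j + h) :
    wdist G w u src ≤ (⨅ v ∈ L, (d' v + wdist G' w' v src)) ∧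
    (⨅ v ∈ L, (d' v + wdist G' w' v src)) ≤
      ENNReal.ofReal (1 + δ) * wdist G w u src := by
  have hw₀ : ∀ e ∈ G.edgeSet, 0 ≤ w e := fun e he ↦ (hw e he).le
  -- `ENNReal.ofReal` truncates negative walk weights, so comparing `G'`-walks needs `w' ≥ 0`.
  have hw'₀ : ∀ e ∈ G'.edgeSet, 0 ≤ w' e := by
    rintro ⟨x, y⟩ hxy
    have hpos := (wdist_pos_of_ne hw (G'.ne_of_adj hxy)).trans_le
      ((wdist_le_hopDist h).trans (hw' x y hxy).1)
    exact (ENNReal.ofReal_pos.mp hpos).le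
  constructor
  · refine le_iInf₂ fun v hv ↦ ?_
    by_cases htop : hopDist G w h u v = ⊤
    · simp [(hd' v hv).2 htop]
    calc wdist G w u src ≤ wdist G w u v + wdist G w v src := wdist_triangle hw₀ u v src
      _ ≤ d' v + wdist G' w' v src := add_le_add
          ((wdist_le_hopDist h).trans ((hd' v hv).1 (lt_top_iff_ne_top.mpr htop)).1)
          (wdist_le_wdist_of_forall_adj hw₀ hw'₀
            fun x y hxy ↦ (wdist_le_hopDist h).trans (hw' x y hxy).1)
  · obtain ⟨j, ⟨hj, hjL⟩, hjh⟩ := hfirst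
    have hfirst_seg := hopDist_getVert_add_walkWeight_drop_le hw₀ p hjh
    have hd'j :=
      ((hd' _ hjL).1 ((le_self_add.trans hfirst_seg).trans_lt ENNReal.ofReal_lt_top)).2
    have hrest := wdist_getVert_le_mul_walkWeight_drop hw₀ hG'edge
      (fun x y hxy ↦ (hw' x y hxy).2) p hgap hj hjL
    calc (⨅ v ∈ L, (d' v + wdist G' w' v src))
        ≤ d' (p.getVert j) + wdist G' w' (p.getVert j) src := iInf₂_le _ hjL
      _ ≤ ENNReal.ofReal (1 + δ) * (hopDist G w h u (p.getVert j) +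
            ENNReal.ofReal (walkWeight w (p.drop j))) := by
          rw [mul_add]
          exact add_le_add hd'j hrest
      _ ≤ ENNReal.ofReal (1 + δ) * wdist G w u src := by
          rw [← hpw]
          exact mul_le_mul_right hfirst_seg _

theorem stmt_15 {V : Type*} [Fintype V] (G : SimpleGraph V) (w : Sym2 V → ℝ)
    (hw : ∀ e ∈ G.edgeSet, 0 < w e)
    (h : ℕ) (hh : 1 ≤ h) (δ : ℝ) (hδ : 0 ≤ δ)
    (L : Set V) (src : V) (hsrc : src ∈ L)
    -- `(G', w')` is a weighted graph on vertex set `L` having an edge `xy` whenever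
    -- `hopDist G w h x y < ∞`, with weight satisfying
    -- `hopDist ≤ w'(xy) ≤ (1 + δ) · hopDist`
    (G' : SimpleGraph V) (w' : Sym2 V → ℝ)
    (hG'sub : ∀ x y : V, G'.Adj x y → x ∈ L ∧ y ∈ L)
    (hG'edge : ∀ x ∈ L, ∀ y ∈ L, x ≠ y → hopDist G w h x y < ⊤ → G'.Adj x y)
    (hw' : ∀ x y : V, G'.Adj x y →
      hopDist G w h x y ≤ ENNReal.ofReal (w' s(x, y)) ∧
      ENNReal.ofReal (w' s(x, y)) ≤ ENNReal.ofReal (1 + δ) * hopDist G w h x y)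
    -- `d' v` approximates the `h`-hop distance from `u` to each `v ∈ L`
    (u : V) (d' : V → ℝ≥0∞)
    (hd' : ∀ v ∈ L,
      (hopDist G w h u v < ⊤ →
        hopDist G w h u v ≤ d' v ∧ d' v ≤ ENNReal.ofReal (1 + δ) * hopDist G w h u v) ∧
      (hopDist G w h u v = ⊤ → d' v = ⊤))
    -- `p` is a shortest `u`–`src` walk whose vertices in `L` occur within the first `h`
    -- hops and at consecutive gaps of at most `h` hops
    (p : G.Walk u src)
    (hpw : ENNReal.ofReal (walkWeight w p) = wdist G w u src)
    (hfirst : ∃ j : ℕ, (j ≤ p.length ∧ p.getVert j ∈ L) ∧ j ≤ h)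
    (hgap : ∀ j : ℕ, j ≤ p.length → p.getVert j ∈ L → j < p.length →
      ∃ j' : ℕ, (j' ≤ p.length ∧ p.getVert j' ∈ L) ∧ j < j' ∧ j' ≤ j + h) :
    wdist G w u src ≤ (⨅ v ∈ L, (d' v + wdist G' w' v src)) ∧
    (⨅ v ∈ L, (d' v + wdist G' w' v src)) ≤
      ENNReal.ofReal (1 + δ) * wdist G w u src :=
  stmt_15_general G w hw h δ L src G' w' hG'edge hw' u d' hd' p hpw hfirst hgap
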